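/- Let C be a pointed, spanning polyhedral cone in E = ℝⁿ and let τ ⊆ σ be faces of C; let π : E → E/span_ℝ τ be the quotient map. Then: (i) every point w̄ of E/span_ℝ τ belongs to each of its σ-vicinities; and (ii) if V₁, …, V_m (m ≥ 1) are sets, each of which is a σ-vicinity of some point of E/span_ℝ τ, and w̄ ∈ V₁ ∩ ⋯ ∩ V_m, then V₁ ∩ ⋯ ∩ V_m contains a σ-vicinity of w̄. In particular, the collection of all σ-vicinities of all points forms a base for a topology on E/span_ℝ τ. -/

import Mathlib

open Pointwise

/-- A polyhedral cone in `ℝⁿ`: an intersection of finitely many closed linear half-spaces. -/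
def IsPolyCone {n : ℕ} (C : Set (Fin n → ℝ)) : Prop :=
  ∃ (m : ℕ) (ℓ : Fin m → ((Fin n → ℝ) →ₗ[ℝ] ℝ)), C = {x | ∀ i, 0 ≤ ℓ i x}

/-- A face of a cone `C`: a subset of `C` containing `0`, closed under addition, and such
that whenever `x, y ∈ C` and `x + y` lies in the subset, both `x` and `y` do. -/
def IsConeFace {M : Type*} [AddCommMonoid M] (σ C : Set M) : Prop :=
  σ ⊆ C ∧ (0 : M) ∈ σ ∧ (∀ x ∈ σ, ∀ y ∈ σ, x + y ∈ σ) ∧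
    ∀ x ∈ C, ∀ y ∈ C, x + y ∈ σ → x ∈ σ ∧ y ∈ σ

/-- A downset for the partial order `x ≼ y ↔ y - x ∈ C`. -/
def IsDownset {n : ℕ} (C D : Set (Fin n → ℝ)) : Prop :=
  ∀ x y : Fin n → ℝ, y ∈ D → y - x ∈ C → x ∈ D

/-- The upper boundary downset `D^σ = {a | a - σ° ⊆ D}`. -/
def upSet {n : ℕ} (D σ : Set (Fin n → ℝ)) : Set (Fin n → ℝ) :=
  {a | ∀ s ∈ intrinsicInterior ℝ σ, a - s ∈ D}

/-- `a` is a cogenerator of the downset `D` along the face `τ` with nadir `σ`: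
`(a + C) ∩ D^σ = a + τ` and no face `σ''` with `τ ⊆ σ'' ⊊ σ` satisfies `a - σ''° ⊆ D`. -/
def IsCogen {n : ℕ} (C D τ σ : Set (Fin n → ℝ)) (a : Fin n → ℝ) : Prop :=
  (({a} + C) ∩ upSet D σ = {a} + τ) ∧
  ∀ σ'' : Set (Fin n → ℝ), IsConeFace σ'' C → τ ⊆ σ'' → σ'' ⊂ σ →
    ¬ (∀ s ∈ intrinsicInterior ℝ σ'', a - s ∈ D)

/-- A `σ`-vicinity of a point `p` of `E ⧸ span τ`: the image under the quotient map of
`u + σ° + C` for some `u` admitting a representative `w` of `p` with `w - u ∈ σ°`. -/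
def IsVic {n : ℕ} (C σ τ : Set (Fin n → ℝ))
    (p : (Fin n → ℝ) ⧸ Submodule.span ℝ τ)
    (V : Set ((Fin n → ℝ) ⧸ Submodule.span ℝ τ)) : Prop :=
  ∃ u w : Fin n → ℝ, (Submodule.span ℝ τ).mkQ w = p ∧
    w - u ∈ intrinsicInterior ℝ σ ∧
    V = (Submodule.span ℝ τ).mkQ '' ({u} + intrinsicInterior ℝ σ + C)

/-
A face `σ` of a convex cone is itself a cone, so its relative interior `σ°` is stable under
positive dilations. If `w̄ = π (uᵢ + sᵢ + cᵢ)` with `sᵢ ∈ σ°`, `cᵢ ∈ C` lies in finitely many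
vicinities `π (uᵢ + σ° + C)`, take `t = δ • s₀ ∈ σ°` with `δ > 0` so small that every `sᵢ - t`
is still in `σ`; this is possible because each `sᵢ` is interior to `σ` relative to `span σ`.
For a representative `w` of `w̄`, the vicinity `π (w - t + σ° + C)` then lies in every
`π (uᵢ + σ° + C)`, because `w - t ≡ uᵢ + (sᵢ - t + cᵢ)` and `sᵢ - t + cᵢ ∈ C`.
-/

open Filter Topology

theorem IsPolyCone.exists_pointedCone {n : ℕ} {C : Set (Fin n → ℝ)} (hC : IsPolyCone C) :
    ∃ K : PointedCone ℝ (Fin n → ℝ), (K : Set (Fin n → ℝ)) = C := by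
  obtain ⟨m, ℓ, rfl⟩ := hC
  exact ⟨PointedCone.dual LinearMap.id (Set.range ℓ), by ext; simp⟩

theorem mem_nhdsWithin_affineSpan_of_mem_intrinsicInterior {𝕜 V P : Type*} [Ring 𝕜]
    [AddCommGroup V] [Module 𝕜 V] [TopologicalSpace P] [AddTorsor V P] {s : Set P} {x : P}
    (hx : x ∈ intrinsicInterior 𝕜 s) : s ∈ 𝓝[affineSpan 𝕜 s] x := by
  obtain ⟨y, hy, rfl⟩ := hx
  exact preimage_coe_mem_nhds_subtype.1 (mem_interior_iff_mem_nhds.1 hy)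

section

variable {E : Type*} [AddCommGroup E] [Module ℝ E]

theorem intrinsicInterior_smul [TopologicalSpace E] [ContinuousSMul ℝ E] {c : ℝ} (hc : c ≠ 0)
    (s : Set E) :
    intrinsicInterior ℝ (c • s) = c • intrinsicInterior ℝ s := by
  have h := (ContinuousLinearEquiv.smulLeft (R₁ := ℝ) (M₁ := E)
    (Units.mk0 c hc)).toContinuousAffineEquiv.intrinsicInterior_image s
  have hfun : ⇑(ContinuousLinearEquiv.smulLeft (R₁ := ℝ) (M₁ := E)
    (Units.mk0 c hc)).toContinuousAffineEquiv = (c • ·) := rfl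
  rwa [hfun, Set.image_smul, Set.image_smul] at h

theorem LinearMap.image_singleton_add_add_subset {F : Type*} [AddCommGroup F] [Module ℝ F]
    (f : E →ₗ[ℝ] F) (A : Set E) (K : PointedCone ℝ E) {u v k : E} (hk : k ∈ K)
    (h : f v = f (u + k)) : f '' ({v} + A + K) ⊆ f '' ({u} + A + K) := by
  rintro _ ⟨_, ⟨_, ⟨_, rfl, a, ha, rfl⟩, c, hc, rfl⟩, rfl⟩
  refine ⟨u + a + (k + c), Set.add_mem_add (Set.add_mem_add rfl ha) (K.add_mem hk hc), ?_⟩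
  simp only [map_add] at h ⊢
  rw [h]
  abel

variable {K : PointedCone ℝ E} {σ : Set E}

namespace IsConeFace

theorem smul_mem_of_le_one (hσ : IsConeFace σ K) {c : ℝ} (hc₀ : 0 ≤ c) (hc₁ : c ≤ 1) {x : E}
    (hx : x ∈ σ) : c • x ∈ σ :=
  (hσ.2.2.2 _ (K.smul_mem hc₀ (hσ.1 hx)) _ (K.smul_mem (sub_nonneg.2 hc₁) (hσ.1 hx))
    (by rwa [← add_smul, add_sub_cancel, one_smul])).1

theorem nsmul_mem (hσ : IsConeFace σ K) (k : ℕ) {x : E} (hx : x ∈ σ) : k • x ∈ σ := by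
  induction k with
  | zero => simpa using hσ.2.1
  | succ k ih => rw [succ_nsmul]; exact hσ.2.2.1 _ ih _ hx

theorem smul_mem (hσ : IsConeFace σ K) {c : ℝ} (hc : 0 ≤ c) {x : E} (hx : x ∈ σ) : c • x ∈ σ := by
  rcases hc.eq_or_lt with rfl | hc
  · simpa using hσ.2.1
  obtain ⟨k, hk⟩ := exists_nat_ge c
  have hk₀ : (0 : ℝ) < k := hc.trans_le hk
  rw [← div_mul_cancel₀ c hk₀.ne', ← smul_smul, Nat.cast_smul_eq_nsmul]
  exact hσ.smul_mem_of_le_one (by positivity) (div_le_one_of_le₀ hk hk₀.le) (hσ.nsmul_mem k hx)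

theorem smul_set_eq (hσ : IsConeFace σ K) {c : ℝ} (hc : 0 < c) : c • σ = σ := by
  refine (Set.smul_set_subset_iff.2 fun x hx => hσ.smul_mem hc.le hx).antisymm fun x hx => ?_
  exact Set.mem_smul_set.2 ⟨c⁻¹ • x, hσ.smul_mem (inv_nonneg.2 hc.le) hx, smul_inv_smul₀ hc.ne' x⟩

variable [TopologicalSpace E] [ContinuousSMul ℝ E]

theorem smul_mem_intrinsicInterior (hσ : IsConeFace σ K) {c : ℝ} (hc : 0 < c) {x : E}
    (hx : x ∈ intrinsicInterior ℝ σ) : c • x ∈ intrinsicInterior ℝ σ := by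
  rw [← hσ.smul_set_eq hc, intrinsicInterior_smul hc.ne']
  exact Set.smul_mem_smul_set hx

theorem exists_sub_mem_of_mem_intrinsicInterior [IsTopologicalAddGroup E] (hσ : IsConeFace σ K)
    {ι : Type*} [Finite ι] {s : ι → E} (hs : ∀ i, s i ∈ intrinsicInterior ℝ σ) {t₀ : E}
    (ht₀ : t₀ ∈ intrinsicInterior ℝ σ) :
    ∃ t ∈ intrinsicInterior ℝ σ, ∀ i, s i - t ∈ σ := by
  have hspan : (affineSpan ℝ σ : Set E) = Submodule.span ℝ σ := by
    rw [← affineSpan_insert_zero, Set.insert_eq_of_mem hσ.2.1]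
  have hmem_span {x : E} (hx : x ∈ intrinsicInterior ℝ σ) : x ∈ Submodule.span ℝ σ :=
    Submodule.subset_span (intrinsicInterior_subset hx)
  have hnear (i : ι) : ∀ᶠ δ in 𝓝[>] (0 : ℝ), s i - δ • t₀ ∈ σ := by
    have hσ_nhds := mem_nhdsWithin_affineSpan_of_mem_intrinsicInterior (hs i)
    rw [hspan] at hσ_nhds
    refine (tendsto_nhdsWithin_iff.2 ⟨?_, .of_forall fun δ => ?_⟩).eventually hσ_nhds
    · have hcont : Continuous fun δ : ℝ => s i - δ • t₀ := by fun_prop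
      simpa using (hcont.tendsto 0).mono_left nhdsWithin_le_nhds
    · exact (Submodule.span ℝ σ).sub_mem (hmem_span (hs i)) ((Submodule.span ℝ σ).smul_mem δ
        (hmem_span ht₀))
  obtain ⟨δ, hδ, hδ₀⟩ := ((eventually_all.2 hnear).and self_mem_nhdsWithin).exists
  exact ⟨δ • t₀, hσ.smul_mem_intrinsicInterior hδ₀ ht₀, hδ⟩

end IsConeFace

end

theorem IsVic.self_mem {n : ℕ} {C σ τ : Set (Fin n → ℝ)} {p : (Fin n → ℝ) ⧸ Submodule.span ℝ τ}
    {V : Set ((Fin n → ℝ) ⧸ Submodule.span ℝ τ)} (hV : IsVic C σ τ p V)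
    (hC : (0 : Fin n → ℝ) ∈ C) : p ∈ V := by
  obtain ⟨u, w, rfl, hw, rfl⟩ := hV
  exact ⟨u + (w - u) + 0, Set.add_mem_add (Set.add_mem_add rfl hw) hC, by simp⟩

theorem vicinities_form_basis_general {n : ℕ} (C τ σ : Set (Fin n → ℝ))
    (hC : IsPolyCone C) (hσ : IsConeFace σ C) :
    (∀ (p : (Fin n → ℝ) ⧸ Submodule.span ℝ τ)
       (V : Set ((Fin n → ℝ) ⧸ Submodule.span ℝ τ)), IsVic C σ τ p V → p ∈ V) ∧
    (∀ (m : ℕ), 1 ≤ m →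
      ∀ V : Fin m → Set ((Fin n → ℝ) ⧸ Submodule.span ℝ τ),
        (∀ i, ∃ p, IsVic C σ τ p (V i)) →
        ∀ w : (Fin n → ℝ) ⧸ Submodule.span ℝ τ, (∀ i, w ∈ V i) →
          ∃ W, IsVic C σ τ w W ∧ W ⊆ ⋂ i, V i) := by
  refine ⟨fun p V hV => hV.self_mem (hσ.1 hσ.2.1), fun m hm V hV w hw => ?_⟩
  obtain ⟨K, rfl⟩ := hC.exists_pointedCone
  set π := (Submodule.span ℝ τ).mkQ
  choose p u w' _ _ hVu using hV
  have hrep (i : Fin m) : ∃ s ∈ intrinsicInterior ℝ σ, ∃ c ∈ K, π (u i + s + c) = w := by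
    obtain ⟨_, ⟨_, ⟨_, rfl, s, hs, rfl⟩, c, hc, rfl⟩, hx⟩ := hVu i ▸ hw i
    exact ⟨s, hs, c, hc, hx⟩
  choose s hs c hc hsc using hrep
  obtain ⟨t, ht, hst⟩ := hσ.exists_sub_mem_of_mem_intrinsicInterior hs (hs ⟨0, hm⟩)
  obtain ⟨w₀, rfl⟩ := (Submodule.span ℝ τ).mkQ_surjective w
  refine ⟨π '' ({w₀ - t} + intrinsicInterior ℝ σ + K), ⟨w₀ - t, w₀, rfl, by simpa using ht, rfl⟩,
    Set.subset_iInter fun i => hVu i ▸ π.image_singleton_add_add_subset _ K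
      (K.add_mem (hσ.1 (hst i)) (hc i)) ?_⟩
  rw [map_sub, ← hsc i]
  simp only [map_add, map_sub]
  abel

/-- Every point belongs to each of its `σ`-vicinities, and any finite
intersection of `σ`-vicinities contains a `σ`-vicinity of each of its points; hence the
`σ`-vicinities form a base for a topology on `E ⧸ span τ`. -/
theorem vicinities_form_basis {n : ℕ} (C τ σ : Set (Fin n → ℝ))
    (hC : IsPolyCone C) (hpointed : C ∩ (-C) = {0}) (hspan : C - C = Set.univ)
    (hτ : IsConeFace τ C) (hσ : IsConeFace σ C) (hts : τ ⊆ σ) :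
    (∀ (p : (Fin n → ℝ) ⧸ Submodule.span ℝ τ)
       (V : Set ((Fin n → ℝ) ⧸ Submodule.span ℝ τ)), IsVic C σ τ p V → p ∈ V) ∧
    (∀ (m : ℕ), 1 ≤ m →
      ∀ V : Fin m → Set ((Fin n → ℝ) ⧸ Submodule.span ℝ τ),
        (∀ i, ∃ p, IsVic C σ τ p (V i)) →
        ∀ w : (Fin n → ℝ) ⧸ Submodule.span ℝ τ, (∀ i, w ∈ V i) →
          ∃ W, IsVic C σ τ w W ∧ W ⊆ ⋂ i, V i) :=
  vicinities_form_basis_general C τ σ hC hσ
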